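/- Let D be a squarefree positive integer, χ the primitive quadratic Dirichlet character modulo D, and q₁ a divisor of D. Let λ : ℕ⁺ → ℂ satisfy λ(1) = 1 and the Hecke relation λ(m)·λ(n) = Σ_{d ∣ gcd(m,n), gcd(d,q₁)=1} λ(mn/d²) for all positive integers m, n, and suppose |λ(n)| ≤ C·n^A for some constants C, A ≥ 0. Then for every complex s with Re(s) > A + 1, (Σ_{n≥1} λ(n)·n^{−s}) · (Σ_{n≥1} λ(n)·χ(n)·n^{−s}) = L(2s,χ) · Σ_{m≥1} λ(m)·(Σ_{ab=m} χ(a)) · m^{−s}, where all series converge absolutely and L(·,χ) is the Dirichlet L-function of χ. (This is the first identity of Lemma A.2 of the paper, expressing L(s,f)·L(s,f⊗χ_D) as L(2s,χ_D) times a Rankin–Selberg Dirichlet series.) -/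
import Mathlib

open Finset Complex

open scoped LSeries.notation

private lemma summable_norm_aux (F : ℕ → ℂ) (c p : ℝ) (hc : 0 ≤ c) (hp : p < -1)
    (h0 : F 0 = 0) (h : ∀ n : ℕ, 0 < n → ‖F n‖ ≤ c * (n : ℝ) ^ p) :
    Summable fun n : ℕ => ‖F n‖ := by
  refine Summable.of_nonneg_of_le (fun n => norm_nonneg _) ?_
    ((Real.summable_nat_rpow.mpr hp).mul_left c)
  intro n
  rcases Nat.eq_zero_or_pos n with rfl | hn
  · rw [h0, norm_zero]; positivity
  · exact h n hn

private lemma term_eq_aux {s : ℂ} (hs : s ≠ 0) (F : ℕ → ℂ) (n : ℕ) :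
    F n * (n : ℂ) ^ (-s) = LSeries.term F s n := by
  rw [LSeries.term_of_ne_zero' hs, cpow_neg, div_eq_mul_inv]

private lemma norm_mul_cpow_aux (a : ℂ) {n : ℕ} (hn : 0 < n) (s : ℂ) :
    ‖a * (n : ℂ) ^ (-s)‖ = ‖a‖ * (n : ℝ) ^ (-s.re) := by
  rw [norm_mul, Complex.norm_natCast_cpow_of_pos hn, neg_re]

private lemma summable_shape_aux (F : ℕ → ℂ) (c a : ℝ) (hc : 0 ≤ c) {s : ℂ} (hs0 : s ≠ 0)
    (hs : a + 1 < s.re) (h : ∀ n : ℕ, 0 < n → ‖F n‖ ≤ c * (n : ℝ) ^ a) :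
    Summable fun n : ℕ => ‖F n * (n : ℂ) ^ (-s)‖ := by
  refine summable_norm_aux _ c (a - s.re) hc (by linarith) ?_ ?_
  · rw [Nat.cast_zero, zero_cpow (neg_ne_zero.mpr hs0), mul_zero]
  · intro n hn
    rw [norm_mul_cpow_aux _ hn]
    have hnp : (0 : ℝ) < (n : ℝ) := by exact_mod_cast hn
    calc ‖F n‖ * (n : ℝ) ^ (-s.re) ≤ (c * (n : ℝ) ^ a) * (n : ℝ) ^ (-s.re) :=
        mul_le_mul_of_nonneg_right (h n hn) (Real.rpow_nonneg (Nat.cast_nonneg n) _)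
      _ = c * (n : ℝ) ^ (a - s.re) := by
        rw [mul_assoc, ← Real.rpow_add hnp, sub_eq_add_neg]
private lemma key_aux (D : ℕ) [NeZero D] (χ : DirichletCharacter ℂ D)
    (q₁ : ℕ) (hq₁ : q₁ ∣ D) (f : ℕ → ℂ)
    (hHecke : ∀ m n : ℕ, 0 < m → 0 < n →
      f m * f n =
        ∑ d ∈ (Nat.gcd m n).divisors.filter (fun d => Nat.Coprime d q₁), f (m * n / d ^ 2))
    (N : ℕ) :
    ∑ p ∈ N.divisorsAntidiagonal, f p.1 * (f p.2 * χ (p.2 : ZMod D)) =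
      ∑ p ∈ N.divisorsAntidiagonal,
        (if (Nat.sqrt p.1) ^ 2 = p.1 then χ ((Nat.sqrt p.1 : ℕ) : ZMod D) else 0) *
          (f p.2 * ∑ ab ∈ p.2.divisorsAntidiagonal, χ (ab.1 : ZMod D)) := by
  classical
  -- Step 1: pointwise Hecke + character splitting
  have pair : ∀ m n : ℕ, 0 < m → 0 < n →
      f m * (f n * χ ((n : ℕ) : ZMod D)) =
        ∑ d ∈ (Nat.gcd m n).divisors,
          f (m * n / d ^ 2) * (χ ((d : ℕ) : ZMod D) * χ ((n / d : ℕ) : ZMod D)) := by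
    intro m n hm hn
    rw [← mul_assoc, hHecke m n hm hn, Finset.sum_mul, Finset.sum_filter]
    refine Finset.sum_congr rfl fun d hd => ?_
    obtain ⟨hdg, hg0⟩ := Nat.mem_divisors.mp hd
    have hdn : d ∣ n := hdg.trans (Nat.gcd_dvd_right m n)
    by_cases hDc : d.Coprime D
    · have hq : d.Coprime q₁ := Nat.Coprime.coprime_dvd_right hq₁ hDc
      rw [if_pos hq]
      have hcast : ((n : ℕ) : ZMod D) = ((d : ℕ) : ZMod D) * ((n / d : ℕ) : ZMod D) := by
        rw [← Nat.cast_mul, Nat.mul_div_cancel' hdn]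
      rw [hcast, map_mul]
    · have hχd : χ ((d : ℕ) : ZMod D) = 0 := by
        apply χ.map_nonunit
        rwa [ZMod.isUnit_iff_coprime]
      by_cases hq : d.Coprime q₁
      · have hχn : χ ((n : ℕ) : ZMod D) = 0 := by
          apply χ.map_nonunit
          rw [ZMod.isUnit_iff_coprime]
          exact fun h => hDc (Nat.Coprime.coprime_dvd_left hdn h)
        rw [if_pos hq, hχn, hχd]
        ring
      · rw [if_neg hq, hχd]
        ring
  calc
    ∑ p ∈ N.divisorsAntidiagonal, f p.1 * (f p.2 * χ ((p.2 : ℕ) : ZMod D)) =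
        ∑ p ∈ N.divisorsAntidiagonal, ∑ d ∈ (Nat.gcd p.1 p.2).divisors,
          f (p.1 * p.2 / d ^ 2) * (χ ((d : ℕ) : ZMod D) * χ ((p.2 / d : ℕ) : ZMod D)) := by
      refine Finset.sum_congr rfl fun p hp => ?_
      obtain ⟨hpN, hN0⟩ := Nat.mem_divisorsAntidiagonal.mp hp
      have h1 : 0 < p.1 := Nat.pos_of_ne_zero fun h => hN0 (by rw [← hpN, h, zero_mul])
      have h2 : 0 < p.2 := Nat.pos_of_ne_zero fun h => hN0 (by rw [← hpN, h, mul_zero])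
      exact pair p.1 p.2 h1 h2
    _ = ∑ x ∈ N.divisorsAntidiagonal.sigma (fun p => (Nat.gcd p.1 p.2).divisors),
          f (x.1.1 * x.1.2 / x.2 ^ 2) *
            (χ ((x.2 : ℕ) : ZMod D) * χ ((x.1.2 / x.2 : ℕ) : ZMod D)) := by
      rw [Finset.sum_sigma]
    _ = ∑ y ∈ (N.divisorsAntidiagonal.filter fun p => (Nat.sqrt p.1) ^ 2 = p.1).sigma
          (fun p => p.2.divisorsAntidiagonal),
          χ ((Nat.sqrt y.1.1 : ℕ) : ZMod D) * (f y.1.2 * χ ((y.2.1 : ℕ) : ZMod D)) := by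
      refine Finset.sum_nbij'
        (fun x => ⟨(x.2 ^ 2, x.1.1 / x.2 * (x.1.2 / x.2)), (x.1.2 / x.2, x.1.1 / x.2)⟩)
        (fun y => ⟨(Nat.sqrt y.1.1 * y.2.2, Nat.sqrt y.1.1 * y.2.1), Nat.sqrt y.1.1⟩)
        ?_ ?_ ?_ ?_ ?_
      · rintro ⟨⟨m, n⟩, d⟩ hx
        simp only [Finset.mem_sigma, Nat.mem_divisorsAntidiagonal, Nat.mem_divisors] at hx
        obtain ⟨⟨hmn, hN0⟩, hdg, hg0⟩ := hx
        have hdm : d ∣ m := hdg.trans (Nat.gcd_dvd_left m n)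
        have hdn : d ∣ n := hdg.trans (Nat.gcd_dvd_right m n)
        have hkey : d ^ 2 * (m / d * (n / d)) = N := by
          rw [pow_two, mul_mul_mul_comm, Nat.mul_div_cancel' hdm, Nat.mul_div_cancel' hdn, hmn]
        simp only [Finset.mem_sigma, Finset.mem_filter, Nat.mem_divisorsAntidiagonal]
        refine ⟨⟨⟨hkey, hN0⟩, by rw [Nat.sqrt_eq']⟩, ?_, ?_⟩
        · rw [mul_comm]
        · intro h
          rw [h, mul_zero] at hkey
          exact hN0 hkey.symm
      · rintro ⟨⟨u, e⟩, a, b⟩ hy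
        simp only [Finset.mem_sigma, Finset.mem_filter, Nat.mem_divisorsAntidiagonal] at hy
        obtain ⟨⟨⟨hueN, hN0⟩, hsq⟩, habe, he0⟩ := hy
        have hmn : Nat.sqrt u * b * (Nat.sqrt u * a) = N := by
          rw [mul_mul_mul_comm, ← pow_two, hsq, mul_comm b a, habe, hueN]
        have hm0 : Nat.sqrt u * b ≠ 0 := fun h => hN0 (by rw [← hmn, h, zero_mul])
        simp only [Finset.mem_sigma, Nat.mem_divisorsAntidiagonal, Nat.mem_divisors]
        refine ⟨⟨hmn, hN0⟩, Nat.dvd_gcd ⟨b, rfl⟩ ⟨a, rfl⟩, ?_⟩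
        intro h
        exact hm0 (Nat.gcd_eq_zero_iff.mp h).1
      · rintro ⟨⟨m, n⟩, d⟩ hx
        simp only [Finset.mem_sigma, Nat.mem_divisorsAntidiagonal, Nat.mem_divisors] at hx
        obtain ⟨⟨hmn, hN0⟩, hdg, hg0⟩ := hx
        have hdm : d ∣ m := hdg.trans (Nat.gcd_dvd_left m n)
        have hdn : d ∣ n := hdg.trans (Nat.gcd_dvd_right m n)
        simp only [Nat.sqrt_eq']
        rw [Nat.mul_div_cancel' hdm, Nat.mul_div_cancel' hdn]
      · rintro ⟨⟨u, e⟩, a, b⟩ hy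
        simp only [Finset.mem_sigma, Finset.mem_filter, Nat.mem_divisorsAntidiagonal] at hy
        obtain ⟨⟨⟨hueN, hN0⟩, hsq⟩, habe, he0⟩ := hy
        have hr0 : 0 < Nat.sqrt u := by
          refine Nat.pos_of_ne_zero fun h => hN0 ?_
          rw [h, pow_two, zero_mul] at hsq
          rw [← hueN, ← hsq, zero_mul]
        simp only
        rw [Nat.mul_div_cancel_left _ hr0, Nat.mul_div_cancel_left _ hr0, hsq, mul_comm b a, habe]
      · rintro ⟨⟨m, n⟩, d⟩ hx
        simp only [Finset.mem_sigma, Nat.mem_divisorsAntidiagonal, Nat.mem_divisors] at hx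
        obtain ⟨⟨hmn, hN0⟩, hdg, hg0⟩ := hx
        have hdm : d ∣ m := hdg.trans (Nat.gcd_dvd_left m n)
        have hdn : d ∣ n := hdg.trans (Nat.gcd_dvd_right m n)
        simp only [Nat.sqrt_eq']
        have harg : m * n / d ^ 2 = m / d * (n / d) := by
          rw [Nat.div_mul_div_comm hdm hdn, pow_two]
        rw [harg]
        ring
    _ = ∑ p ∈ N.divisorsAntidiagonal.filter (fun p => (Nat.sqrt p.1) ^ 2 = p.1),
          ∑ ab ∈ p.2.divisorsAntidiagonal,
            χ ((Nat.sqrt p.1 : ℕ) : ZMod D) * (f p.2 * χ ((ab.1 : ℕ) : ZMod D)) := by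
      rw [Finset.sum_sigma]
    _ = ∑ p ∈ N.divisorsAntidiagonal.filter (fun p => (Nat.sqrt p.1) ^ 2 = p.1),
        (if (Nat.sqrt p.1) ^ 2 = p.1 then χ ((Nat.sqrt p.1 : ℕ) : ZMod D) else 0) *
          (f p.2 * ∑ ab ∈ p.2.divisorsAntidiagonal, χ ((ab.1 : ℕ) : ZMod D)) := by
      refine Finset.sum_congr rfl fun p hp => ?_
      rw [if_pos (Finset.mem_filter.mp hp).2, Finset.mul_sum, Finset.mul_sum]
    _ = ∑ p ∈ N.divisorsAntidiagonal,
        (if (Nat.sqrt p.1) ^ 2 = p.1 then χ ((Nat.sqrt p.1 : ℕ) : ZMod D) else 0) *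
          (f p.2 * ∑ ab ∈ p.2.divisorsAntidiagonal, χ ((ab.1 : ℕ) : ZMod D)) := by
      refine Finset.sum_subset (Finset.filter_subset _ _) fun p hp hnp => ?_
      rw [if_neg, zero_mul]
      intro h
      exact hnp (Finset.mem_filter.mpr ⟨hp, h⟩)
private lemma Lg_aux (D : ℕ) [NeZero D] (χ : DirichletCharacter ℂ D) {s : ℂ} (hs : s ≠ 0)
    (hsum : LSeriesSummable
      (fun u : ℕ => if (Nat.sqrt u) ^ 2 = u then χ ((Nat.sqrt u : ℕ) : ZMod D) else 0) s) :
    LSeries (fun u : ℕ => if (Nat.sqrt u) ^ 2 = u then χ ((Nat.sqrt u : ℕ) : ZMod D) else 0) s =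
      LSeries (fun n : ℕ => χ ((n : ℕ) : ZMod D)) (2 * s) := by
  set g : ℕ → ℂ := fun u : ℕ => if (Nat.sqrt u) ^ 2 = u then χ ((Nat.sqrt u : ℕ) : ZMod D) else 0
    with hg
  have hinj : Function.Injective (fun d : ℕ => d ^ 2) := fun a b h => by
    have := congrArg Nat.sqrt h
    simpa [Nat.sqrt_eq'] using this
  have hsupp : ∀ x : ℕ, x ∉ Set.range (fun d : ℕ => d ^ 2) → LSeries.term g s x = 0 := by
    intro x hx
    rcases eq_or_ne x 0 with rfl | hx0
    · simp
    · rw [LSeries.term_of_ne_zero hx0]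
      have hxg : g x = 0 := by
        rw [hg]
        simp only
        rw [if_neg]
        intro h
        exact hx ⟨Nat.sqrt x, h⟩
      rw [hxg, zero_div]
  have hpt : ∀ d : ℕ, (LSeries.term g s ∘ fun d : ℕ => d ^ 2) d =
      LSeries.term (fun n : ℕ => χ ((n : ℕ) : ZMod D)) (2 * s) d := by
    intro d
    rcases eq_or_ne d 0 with rfl | hd0
    · simp
    · have hd2 : d ^ 2 ≠ 0 := pow_ne_zero 2 hd0
      simp only [Function.comp_apply, LSeries.term_of_ne_zero hd2,
        LSeries.term_of_ne_zero hd0]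
      congr 1
      · rw [hg]
        simp only
        rw [Nat.sqrt_eq', if_pos rfl]
      · have hcast : ((d ^ 2 : ℕ) : ℂ) = ((d : ℝ) : ℂ) * ((d : ℝ) : ℂ) := by
          push_cast
          ring
        have hne : ((d : ℝ) : ℂ) ≠ 0 := by
          exact_mod_cast Nat.cast_ne_zero.mpr hd0
        calc ((d ^ 2 : ℕ) : ℂ) ^ s = (((d : ℝ) : ℂ) * ((d : ℝ) : ℂ)) ^ s := by rw [hcast]
          _ = ((d : ℝ) : ℂ) ^ s * ((d : ℝ) : ℂ) ^ s :=
              mul_cpow_ofReal_nonneg (Nat.cast_nonneg d) (Nat.cast_nonneg d) s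
          _ = ((d : ℝ) : ℂ) ^ (s + s) := (cpow_add _ _ hne).symm
          _ = ((d : ℕ) : ℂ) ^ (2 * s) := by rw [two_mul]; norm_cast
  have h1 : HasSum (LSeries.term (fun n : ℕ => χ ((n : ℕ) : ZMod D)) (2 * s)) (LSeries g s) := by
    have h2 : HasSum (LSeries.term g s ∘ fun d : ℕ => d ^ 2) (LSeries g s) :=
      (Function.Injective.hasSum_iff hinj hsupp).mpr hsum.hasSum
    exact (funext hpt) ▸ h2
  exact h1.tsum_eq.symm

private lemma summable_divcount_aux {t : ℝ} (ht : 1 < t) :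
    Summable fun m : ℕ => (m.divisorsAntidiagonal.card : ℝ) * (m : ℝ) ^ (-t) := by
  have h1 : LSeriesSummable 1 (t : ℂ) := LSeriesSummable_one_iff.mpr (by simpa using ht)
  have h2 : Summable (LSeries.term ((1 : ℕ → ℂ) ⍟ 1) (t : ℂ)) := h1.convolution h1
  have hpt : ∀ m : ℕ, LSeries.term ((1 : ℕ → ℂ) ⍟ 1) (t : ℂ) m =
      (((m.divisorsAntidiagonal.card : ℝ) * (m : ℝ) ^ (-t) : ℝ) : ℂ) := by
    intro m
    rcases eq_or_ne m 0 with rfl | hm0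
    · simp
    · have hm : 0 < (m : ℝ) := by positivity
      rw [LSeries.term_of_ne_zero hm0, LSeries.convolution_def]
      simp only [Pi.one_apply, mul_one, Finset.sum_const, nsmul_eq_mul]
      rw [Real.rpow_neg hm.le, Complex.ofReal_mul, Complex.ofReal_inv,
        Complex.ofReal_cpow hm.le]
      push_cast
      rw [div_eq_mul_inv]
  exact Complex.summable_ofReal.mp (h2.congr hpt)

/-- If `f` satisfies `f 1 = 1`, the Hecke relation at level `q₁ ∣ D`
(with `χ` the primitive quadratic character mod squarefree `D`), and polynomial growth,
then for `Re s > A + 1`: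
`(∑ f n n^{-s})(∑ f n χ n n^{-s}) = L(2s,χ) ∑ f m (∑_{ab=m} χ a) m^{-s}`,
all series converging absolutely. -/
theorem stmt_5 (D : ℕ) [NeZero D] (hsf : Squarefree D) (hD : 0 < D)
    (χ : DirichletCharacter ℂ D) (hquad : χ ^ 2 = 1) (hprim : χ.IsPrimitive)
    (q₁ : ℕ) (hq₁ : q₁ ∣ D)
    (f : ℕ → ℂ) (hf1 : f 1 = 1)
    (hHecke : ∀ m n : ℕ, 0 < m → 0 < n →
      f m * f n =
        ∑ d ∈ (Nat.gcd m n).divisors.filter (fun d => Nat.Coprime d q₁), f (m * n / d ^ 2))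
    (C A : ℝ) (hC : 0 ≤ C) (hA : 0 ≤ A)
    (hbound : ∀ n : ℕ, 0 < n → ‖f n‖ ≤ C * (n : ℝ) ^ A)
    (s : ℂ) (hs : A + 1 < s.re) :
    (Summable fun n : ℕ => ‖f n * (n : ℂ) ^ (-s)‖) ∧
    (Summable fun n : ℕ => ‖f n * χ (n : ZMod D) * (n : ℂ) ^ (-s)‖) ∧
    (Summable fun m : ℕ =>
      ‖f m * (∑ ab ∈ m.divisorsAntidiagonal, χ (ab.1 : ZMod D)) * (m : ℂ) ^ (-s)‖) ∧
    (∑' n : ℕ, f n * (n : ℂ) ^ (-s)) * (∑' n : ℕ, f n * χ (n : ZMod D) * (n : ℂ) ^ (-s)) =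
      χ.LFunction (2 * s) *
        ∑' m : ℕ,
          f m * (∑ ab ∈ m.divisorsAntidiagonal, χ (ab.1 : ZMod D)) * (m : ℂ) ^ (-s) := by
  classical
  have hs1 : 1 < s.re := by linarith
  have hs0 : s ≠ 0 := by
    intro h
    rw [h] at hs1
    simp only [Complex.zero_re] at hs1
    norm_num at hs1
  have h2s : 1 < (2 * s).re := by
    have h' : (2 * s).re = 2 * s.re := by simp [Complex.mul_re]
    rw [h']; linarith
  -- summability of the first series
  have hsum1 : Summable fun n : ℕ => ‖f n * (n : ℂ) ^ (-s)‖ :=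
    summable_shape_aux f C A hC hs0 hs hbound
  -- summability of the second series
  have hsum2 : Summable fun n : ℕ => ‖f n * χ (n : ZMod D) * (n : ℂ) ^ (-s)‖ := by
    refine summable_shape_aux (fun n => f n * χ (n : ZMod D)) C A hC hs0 hs fun n hn => ?_
    calc ‖f n * χ (n : ZMod D)‖ = ‖f n‖ * ‖χ (n : ZMod D)‖ := norm_mul _ _
      _ ≤ (C * (n : ℝ) ^ A) * 1 :=
          mul_le_mul (hbound n hn) (χ.norm_le_one _) (norm_nonneg _) (by positivity)
      _ = C * (n : ℝ) ^ A := mul_one _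
  -- bound on the character divisor sums
  have hsigma : ∀ m : ℕ, ‖∑ ab ∈ m.divisorsAntidiagonal, χ (ab.1 : ZMod D)‖ ≤
      (m.divisorsAntidiagonal.card : ℝ) := by
    intro m
    refine (norm_sum_le _ _).trans ?_
    calc ∑ ab ∈ m.divisorsAntidiagonal, ‖χ (ab.1 : ZMod D)‖ ≤
        ∑ _ab ∈ m.divisorsAntidiagonal, (1 : ℝ) :=
          Finset.sum_le_sum fun ab _ => χ.norm_le_one _
      _ = (m.divisorsAntidiagonal.card : ℝ) := by simp
  -- summability of the third series
  have ht : 1 < s.re - A := by linarith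
  have hsum3 : Summable fun m : ℕ =>
      ‖f m * (∑ ab ∈ m.divisorsAntidiagonal, χ (ab.1 : ZMod D)) * (m : ℂ) ^ (-s)‖ := by
    refine Summable.of_nonneg_of_le (fun _ => norm_nonneg _) ?_
      ((summable_divcount_aux ht).mul_left C)
    intro m
    rcases Nat.eq_zero_or_pos m with rfl | hm
    · rw [Nat.cast_zero, zero_cpow (neg_ne_zero.mpr hs0), mul_zero, norm_zero]
      simp
    · rw [norm_mul_cpow_aux _ hm]
      have hmp : (0 : ℝ) < (m : ℝ) := by exact_mod_cast hm
      have hb : ‖f m * ∑ ab ∈ m.divisorsAntidiagonal, χ (ab.1 : ZMod D)‖ ≤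
          (C * (m : ℝ) ^ A) * (m.divisorsAntidiagonal.card : ℝ) := by
        rw [norm_mul]
        exact mul_le_mul (hbound m hm) (hsigma m) (norm_nonneg _) (by positivity)
      calc ‖f m * ∑ ab ∈ m.divisorsAntidiagonal, χ (ab.1 : ZMod D)‖ * (m : ℝ) ^ (-s.re) ≤
          ((C * (m : ℝ) ^ A) * (m.divisorsAntidiagonal.card : ℝ)) * (m : ℝ) ^ (-s.re) :=
            mul_le_mul_of_nonneg_right hb (Real.rpow_nonneg (Nat.cast_nonneg m) _)
        _ = C * ((m.divisorsAntidiagonal.card : ℝ) * (m : ℝ) ^ (-(s.re - A))) := by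
            rw [show (m : ℝ) ^ (-(s.re - A)) = (m : ℝ) ^ A * (m : ℝ) ^ (-s.re) by
              rw [← Real.rpow_add hmp]; congr 1; ring]
            ring
  -- L-series summability
  have hfL : LSeriesSummable f s :=
    (Summable.of_norm hsum1).congr fun n => term_eq_aux hs0 f n
  have hGL : LSeriesSummable (fun n : ℕ => f n * χ (n : ZMod D)) s :=
    (Summable.of_norm hsum2).congr fun n =>
      term_eq_aux hs0 (fun n : ℕ => f n * χ (n : ZMod D)) n
  have hHL : LSeriesSummable
      (fun m : ℕ => f m * ∑ ab ∈ m.divisorsAntidiagonal, χ (ab.1 : ZMod D)) s :=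
    (Summable.of_norm hsum3).congr fun n =>
      term_eq_aux hs0 (fun m : ℕ => f m * ∑ ab ∈ m.divisorsAntidiagonal, χ (ab.1 : ZMod D)) n
  have hgL : LSeriesSummable
      (fun u : ℕ => if (Nat.sqrt u) ^ 2 = u then χ ((Nat.sqrt u : ℕ) : ZMod D) else 0) s := by
    have hns : Summable fun u : ℕ =>
        ‖(if (Nat.sqrt u) ^ 2 = u then χ ((Nat.sqrt u : ℕ) : ZMod D) else 0) * (u : ℂ) ^ (-s)‖ := by
      refine summable_shape_aux _ 1 0 zero_le_one hs0 (by linarith) fun n hn => ?_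
      rw [Real.rpow_zero, mul_one]
      split_ifs
      · exact χ.norm_le_one _
      · simp
    exact (Summable.of_norm hns).congr fun n =>
      term_eq_aux hs0
        (fun u : ℕ => if (Nat.sqrt u) ^ 2 = u then χ ((Nat.sqrt u : ℕ) : ZMod D) else 0) n
  -- the identity
  have e1 : (∑' n : ℕ, f n * (n : ℂ) ^ (-s)) = LSeries f s :=
    tsum_congr fun n => term_eq_aux hs0 f n
  have e2 : (∑' n : ℕ, f n * χ (n : ZMod D) * (n : ℂ) ^ (-s)) =
      LSeries (fun n : ℕ => f n * χ (n : ZMod D)) s :=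
    tsum_congr fun n => term_eq_aux hs0 (fun n : ℕ => f n * χ (n : ZMod D)) n
  have e3 : (∑' m : ℕ, f m * (∑ ab ∈ m.divisorsAntidiagonal, χ (ab.1 : ZMod D)) * (m : ℂ) ^ (-s)) =
      LSeries (fun m : ℕ => f m * ∑ ab ∈ m.divisorsAntidiagonal, χ (ab.1 : ZMod D)) s :=
    tsum_congr fun n =>
      term_eq_aux hs0 (fun m : ℕ => f m * ∑ ab ∈ m.divisorsAntidiagonal, χ (ab.1 : ZMod D)) n
  have hconv : (f ⍟ fun n : ℕ => f n * χ (n : ZMod D)) =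
      ((fun u : ℕ => if (Nat.sqrt u) ^ 2 = u then χ ((Nat.sqrt u : ℕ) : ZMod D) else 0) ⍟
        fun m : ℕ => f m * ∑ ab ∈ m.divisorsAntidiagonal, χ (ab.1 : ZMod D)) := by
    funext N
    rw [LSeries.convolution_def, LSeries.convolution_def]
    exact key_aux D χ q₁ hq₁ f hHecke N
  refine ⟨hsum1, hsum2, hsum3, ?_⟩
  rw [e1, e2, e3, ← LSeries_convolution' hfL hGL, hconv, LSeries_convolution' hgL hHL,
    Lg_aux D χ hs0 hgL, DirichletCharacter.LFunction_eq_LSeries χ h2s]
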